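/- arXiv:math/0605210 — 2 statements merged into one kernel-verified Lean document; each statement's English description precedes it below -/
import Mathlib

section
/- Let d ≥ 1, k ∈ ℕ, j ∈ ℕ, and e ∈ 𝕊^{d-1}. For any (ξ', τ) ∈ P_e × ℝ (where P_e = {ξ : ξ·e = 0}), the Lebesgue measure of the set {ξ₁ ∈ ℝ : ξ₁ ∈ [2^{k-2}, 2^{k+2}] and |τ + ξ₁² + |ξ'|²| ≤ 2^{j+1}} is at most C·min(2^{j-k}, 2^k) for an absolute constant C. -/
/-!
On `[a, b]` with `a > 0` the map `ξ₁ ↦ ξ₁²` expands distances by at least `2a`, so the set where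
`ξ₁²` lies in a window of length `2M` has diameter at most `M / a`; it also has measure at most
`b - a`. With `a = 2^{k-2}`, `b = 2^{k+2}` and `M = 2^{j+1}` this gives the bound with `C = 8`.
-/

open MeasureTheory Set
open scoped RealInnerProductSpace

lemma volume_le_of_abs_sq_sub_sq_le {s : Set ℝ} {a δ : ℝ} (ha : 0 < a) (hs : s ⊆ Ici a)
    (h : ∀ x ∈ s, ∀ y ∈ s, |x ^ 2 - y ^ 2| ≤ δ) :
    volume s ≤ ENNReal.ofReal (δ / (2 * a)) := by
  refine (Real.volume_le_diam s).trans (Metric.ediam_le fun x hx y hy => ?_)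
  rw [edist_dist, Real.dist_eq]
  refine ENNReal.ofReal_le_ofReal ((le_div_iff₀ (by positivity)).2 ?_)
  have hxy : 2 * a ≤ |x + y| :=
    (le_abs_self _).trans' (by linarith [mem_Ici.1 (hs hx), mem_Ici.1 (hs hy)])
  calc |x - y| * (2 * a) ≤ |x - y| * |x + y| := by gcongr
    _ = |x ^ 2 - y ^ 2| := by rw [← abs_mul]; ring_nf
    _ ≤ δ := h x hx y hy

lemma volume_setOf_mem_Icc_abs_add_sq_add_le (a b τ σ M : ℝ) (ha : 0 < a) :
    volume {x : ℝ | x ∈ Icc a b ∧ |τ + x ^ 2 + σ| ≤ M} ≤ ENNReal.ofReal (min (M / a) (b - a)) := by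
  set s := {x : ℝ | x ∈ Icc a b ∧ |τ + x ^ 2 + σ| ≤ M}
  rw [ENNReal.ofReal_min]
  refine le_min ?_ ((measure_mono fun x hx => hx.1).trans Real.volume_Icc.le)
  have hwindow : ∀ x ∈ s, ∀ y ∈ s, |x ^ 2 - y ^ 2| ≤ 2 * M := fun x hx y hy => by
    calc |x ^ 2 - y ^ 2| = |(τ + x ^ 2 + σ) - (τ + y ^ 2 + σ)| := by ring_nf
      _ ≤ |τ + x ^ 2 + σ| + |τ + y ^ 2 + σ| := abs_sub _ _
      _ ≤ 2 * M := by linarith [hx.2, hy.2]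
  simpa only [mul_div_mul_left M a (two_ne_zero (α := ℝ))] using
    volume_le_of_abs_sq_sub_sq_le ha (fun x hx => hx.1.1) hwindow

/-- For any `(ξ', τ)` in the hyperplane `P_e × ℝ`, the measure of
`{ξ₁ : ξ₁ ∈ [2^{k-2}, 2^{k+2}], |τ + ξ₁² + |ξ'|²| ≤ 2^{j+1}}` is at most
`C·min(2^{j-k}, 2^k)` for an absolute constant `C`. -/
theorem measure_paraboloid_slice :
    ∃ C : ℝ, 0 < C ∧
      ∀ (d : ℕ), 1 ≤ d → ∀ (k j : ℕ) (e ξ' : EuclideanSpace ℝ (Fin d)),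
        ‖e‖ = 1 → ⟪ξ', e⟫ = 0 → ∀ τ : ℝ,
          volume {ξ₁ : ℝ |
              ξ₁ ∈ Set.Icc ((2 : ℝ) ^ ((k : ℝ) - 2)) ((2 : ℝ) ^ ((k : ℝ) + 2)) ∧
              |τ + ξ₁ ^ 2 + ‖ξ'‖ ^ 2| ≤ 2 ^ ((j : ℝ) + 1)} ≤
            ENNReal.ofReal (C * min ((2 : ℝ) ^ ((j : ℝ) - (k : ℝ))) ((2 : ℝ) ^ (k : ℝ))) := by
  refine ⟨8, by norm_num, fun d _ k j e ξ' _ _ τ => ?_⟩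
  refine (volume_setOf_mem_Icc_abs_add_sq_add_le _ _ τ _ _ (by positivity)).trans
    (ENNReal.ofReal_le_ofReal ?_)
  have hslope : (2 : ℝ) ^ ((j : ℝ) + 1) / 2 ^ ((k : ℝ) - 2) = 8 * 2 ^ ((j : ℝ) - k) := by
    rw [← Real.rpow_sub two_pos, show (j : ℝ) + 1 - (k - 2) = 3 + (j - k) by ring,
      Real.rpow_add two_pos]
    norm_num
  have hlength : (2 : ℝ) ^ ((k : ℝ) + 2) - 2 ^ ((k : ℝ) - 2) ≤ 8 * 2 ^ (k : ℝ) := by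
    have hb : (2 : ℝ) ^ ((k : ℝ) + 2) = 4 * 2 ^ (k : ℝ) := by
      rw [Real.rpow_add two_pos, mul_comm]
      norm_num
    have ha : (0 : ℝ) < 2 ^ ((k : ℝ) - 2) := by positivity
    have hk : (0 : ℝ) < 2 ^ (k : ℝ) := by positivity
    linarith
  rw [hslope, mul_min_of_nonneg _ _ (by norm_num : (0 : ℝ) ≤ 8)]
  exact min_le_min le_rfl hlength
end

section
/- Let D_{k,j} = {(ξ,τ) ∈ ℝ^d × ℝ : |ξ| ∈ [2^{k-1}, 2^{k+1}], |τ+|ξ|²| ≤ 2^{j+1}} for k ≥ 1. If g_j ∈ L²(ℝ^d×ℝ) is supported in D_{k,j}, e ∈ 𝕊^{d-1}, and χ : ℝ → [0,1] is supported in [c·2^k, ∞) with c = 2^{-40}, then for every x₁ ∈ ℝ: ‖∫_ℝ g_j(ξ₁e + ξ', τ) χ(ξ₁) e^{i x₁ ξ₁} dξ₁‖_{L²_{ξ',τ}} ≤ C 2^{-k/2} 2^{j/2} ‖g_j‖_{L²}, where ξ' ranges over the hyperplane P_e = {ξ·e = 0}. -/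
/-!
For fixed `(ξ', τ)`, the integrand in `ξ₁` is supported where `ξ₁ ≥ δ = 2^{-40} 2^k` and `ξ₁²`
lies in an interval of length `2^{j+2}`. Since `ξ₁ ↦ ξ₁²` has slope at least `2δ` there, this set
lies in an interval of length `2^{j+2}/δ`, and Cauchy–Schwarz on it bounds the square of the
`ξ₁`-integral by `2^{j+42-k} ∫ |g|² dξ₁`. Integrating in `(ξ', τ)` (Fubini) gives the estimate
with `C = 2^21`.
-/

open MeasureTheory Complex Set

section

variable {α : Type*} [MeasurableSpace α] {μ : Measure α}

theorem sq_integral_le_measureReal_mul_integral_sq {f : α → ℝ} {s : Set α}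
    (hs : MeasurableSet s) (hμs : μ s ≠ ⊤) (hfs : Function.support f ⊆ s) (hf₀ : 0 ≤ f)
    (hf : MemLp f 2 μ) :
    (∫ x, f x ∂μ) ^ 2 ≤ μ.real s * ∫ x, f x ^ 2 ∂μ := by
  have hholder := integral_mul_le_Lp_mul_Lq_of_nonneg (p := 2) (q := 2) (μ := μ)
    Real.HolderConjugate.two_two (ae_of_all _ (indicator_nonneg fun _ _ => zero_le_one))
    (ae_of_all _ hf₀) (by simpa using memLp_indicator_const 2 hs (1 : ℝ) (Or.inr hμs))
    (by simpa using hf)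
  have hf_eq : (fun x => s.indicator (fun _ => (1 : ℝ)) x * f x) = f := by
    funext x
    by_cases hx : x ∈ s <;> simp [hx, Function.support_subset_iff'.1 hfs x]
  have hind_sq : (fun x => s.indicator (fun _ => (1 : ℝ)) x ^ 2) = s.indicator 1 := by
    funext x
    by_cases hx : x ∈ s <;> simp [hx]
  simp only [Real.rpow_two, ← Real.sqrt_eq_rpow] at hholder
  rw [hf_eq, hind_sq, integral_indicator_one hs] at hholder
  calc (∫ x, f x ∂μ) ^ 2 ≤ (√(μ.real s) * √(∫ x, f x ^ 2 ∂μ)) ^ 2 :=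
        pow_le_pow_left₀ (integral_nonneg hf₀) hholder 2
    _ = μ.real s * ∫ x, f x ^ 2 ∂μ := by
        rw [mul_pow, Real.sq_sqrt measureReal_nonneg,
          Real.sq_sqrt (integral_nonneg fun x => sq_nonneg _)]

/-- `f` need not be measurable (it carries an arbitrary cutoff `χ` below): a non-integrable `f`
has integral `0`. -/
theorem norm_integral_sq_le_measureReal_mul_of_norm_le {E F : Type*} [NormedAddCommGroup E]
    [NormedSpace ℝ E] [NormedAddCommGroup F] {f : α → E} {h : α → F} {s : Set α}
    (hs : MeasurableSet s) (hμs : μ s ≠ ⊤) (hfs : Function.support f ⊆ s)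
    (hfh : ∀ x, ‖f x‖ ≤ ‖h x‖) (hh : Integrable (fun x => ‖h x‖ ^ 2) μ) :
    ‖∫ x, f x ∂μ‖ ^ 2 ≤ μ.real s * ∫ x, ‖h x‖ ^ 2 ∂μ := by
  by_cases hf : Integrable f μ
  swap
  · rw [integral_undef hf, norm_zero, zero_pow two_ne_zero]
    exact mul_nonneg measureReal_nonneg (integral_nonneg fun x => sq_nonneg _)
  have hf_sq_le : ∀ x, ‖f x‖ ^ 2 ≤ ‖h x‖ ^ 2 :=
    fun x => pow_le_pow_left₀ (norm_nonneg _) (hfh x) 2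
  have hf_sq : Integrable (fun x => ‖f x‖ ^ 2) μ :=
    hh.mono' (hf.1.norm.pow 2) (ae_of_all _ fun x => by simpa using hf_sq_le x)
  have hf_norm : MemLp (fun x => ‖f x‖) 2 μ :=
    (memLp_two_iff_integrable_sq_norm hf.1.norm).2 (by simpa using hf_sq)
  calc ‖∫ x, f x ∂μ‖ ^ 2 ≤ (∫ x, ‖f x‖ ∂μ) ^ 2 :=
        pow_le_pow_left₀ (norm_nonneg _) (norm_integral_le_integral_norm f) 2
    _ ≤ μ.real s * ∫ x, ‖f x‖ ^ 2 ∂μ :=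
        sq_integral_le_measureReal_mul_integral_sq hs hμs (fun x hx => hfs (by simpa using hx))
          (fun x => norm_nonneg _) hf_norm
    _ ≤ μ.real s * ∫ x, ‖h x‖ ^ 2 ∂μ :=
        mul_le_mul_of_nonneg_left (integral_mono hf_sq hh hf_sq_le) measureReal_nonneg

theorem integral_le_mul_integral_prod_of_ae_le {β : Type*} [MeasurableSpace β] {ν : Measure β}
    [SFinite μ] [SFinite ν] {Φ : β → ℝ} {H : α × β → ℝ} {K : ℝ} (hΦ : 0 ≤ Φ)
    (hH : Integrable H (μ.prod ν)) (hΦH : ∀ᵐ y ∂ν, Φ y ≤ K * ∫ x, H (x, y) ∂μ) :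
    ∫ y, Φ y ∂ν ≤ K * ∫ z, H z ∂μ.prod ν :=
  calc ∫ y, Φ y ∂ν ≤ ∫ y, K * ∫ x, H (x, y) ∂μ ∂ν :=
        integral_mono_of_nonneg (ae_of_all _ hΦ) (hH.integral_prod_right.const_mul K) hΦH
    _ = K * ∫ z, H z ∂μ.prod ν := by rw [integral_const_mul, integral_prod_symm _ hH]

end

theorem abs_sub_le_div_of_abs_sq_sub_le {x y c δ m : ℝ} (hδ : 0 < δ) (hδx : δ ≤ x) (hδy : δ ≤ y)
    (hx : |x ^ 2 - c| ≤ m) (hy : |y ^ 2 - c| ≤ m) : |x - y| ≤ m / δ := by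
  rw [le_div_iff₀ hδ]
  have : |x - y| * (2 * δ) ≤ |x ^ 2 - c| + |y ^ 2 - c| :=
    calc |x - y| * (2 * δ) ≤ |x - y| * |x + y| := by
          rw [abs_of_pos (by linarith : 0 < x + y)]; gcongr; linarith
      _ = |(x ^ 2 - c) - (y ^ 2 - c)| := by rw [← abs_mul]; ring_nf
      _ ≤ |x ^ 2 - c| + |y ^ 2 - c| := abs_sub _ _
  linarith

theorem norm_integral_sq_le_of_support_subset_abs_sq_sub_le {E F : Type*} [NormedAddCommGroup E]
    [NormedSpace ℝ E] [NormedAddCommGroup F] {f : ℝ → E} {h : ℝ → F} {δ m c : ℝ}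
    (hδ : 0 < δ) (hm : 0 ≤ m) (hfs : Function.support f ⊆ {x | δ ≤ x ∧ |x ^ 2 - c| ≤ m})
    (hfh : ∀ x, ‖f x‖ ≤ ‖h x‖) (hh : Integrable (fun x => ‖h x‖ ^ 2)) :
    ‖∫ x, f x‖ ^ 2 ≤ 2 * m / δ * ∫ x, ‖h x‖ ^ 2 := by
  obtain ⟨x₀, hx₀⟩ : ∃ x₀, Function.support f ⊆ Icc (x₀ - m / δ) (x₀ + m / δ) := by
    rcases (Function.support f).eq_empty_or_nonempty with hempty | ⟨x₀, hx₀⟩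
    · exact ⟨0, hempty ▸ empty_subset _⟩
    refine ⟨x₀, fun x hx => ?_⟩
    have hdist := abs_sub_le_div_of_abs_sq_sub_le hδ (hfs hx).1 (hfs hx₀).1 (hfs hx).2 (hfs hx₀).2
    rw [abs_sub_le_iff] at hdist
    exact ⟨by linarith, by linarith⟩
  have hwidth : volume.real (Icc (x₀ - m / δ) (x₀ + m / δ)) = 2 * m / δ := by
    rw [Real.volume_real_Icc_of_le (by linarith [div_nonneg hm hδ.le])]
    ring
  rw [← hwidth]
  exact norm_integral_sq_le_measureReal_mul_of_norm_le measurableSet_Icc measure_Icc_lt_top.ne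
    hx₀ hfh hh

theorem norm_mul_ofReal_mul_exp_le {z : ℂ} {r : ℝ} (hr : r ∈ Icc (0 : ℝ) 1) (a b : ℝ) :
    ‖z * (r : ℂ) * exp (I * a * b)‖ ≤ ‖z‖ := by
  have hexp : ‖exp (I * a * b)‖ = 1 := by
    rw [show I * a * b = ((a * b : ℝ) : ℂ) * I by push_cast; ring, norm_exp_ofReal_mul_I]
  rw [norm_mul, norm_mul, hexp, mul_one, norm_real, Real.norm_of_nonneg hr.1]
  exact mul_le_of_le_one_right (norm_nonneg _) hr.2

theorem rpow_half_two_mul_two_rpow_div (j k : ℝ) :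
    (2 * 2 ^ (j + 1) / (2 ^ (-40 : ℝ) * 2 ^ k)) ^ (1 / 2 : ℝ) =
      (2 : ℝ) ^ (21 : ℝ) * 2 ^ (-k / 2) * 2 ^ (j / 2) := by
  have hexp : 2 * 2 ^ (j + 1) / (2 ^ (-40 : ℝ) * 2 ^ k) = (2 : ℝ) ^ (j + 42 - k) := by
    rw [show j + 42 - k = 1 + (j + 1) - (-40 + k) by ring, Real.rpow_sub two_pos,
      Real.rpow_add two_pos 1, Real.rpow_add two_pos (-40), Real.rpow_one]
  rw [hexp, ← Real.rpow_mul zero_le_two, ← Real.rpow_add two_pos, ← Real.rpow_add two_pos]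
  ring_nf

/-- Local smoothing: if `g_j` is supported in
`D_{k,j} = {|ξ| ∈ [2^{k-1},2^{k+1}], |τ+|ξ|²| ≤ 2^{j+1}}` and `χ : ℝ → [0,1]` is supported in
`[2^{-40}·2^k, ∞)`, then for every `x₁`,
`‖∫ g_j(ξ₁e+ξ',τ) χ(ξ₁) e^{ix₁ξ₁} dξ₁‖_{L²_{ξ',τ}} ≤ C 2^{-k/2} 2^{j/2} ‖g_j‖_{L²}`.
Here we write `ℝ^d = ℝ e ⊕ P_e` in coordinates, `ξ = ξ₁ e + ξ'` with `ξ' ∈ P_e ≅ ℝ^{n}`,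
`n = d - 1`. -/
theorem local_smoothing_estimate :
    ∃ C : ℝ, 0 < C ∧
      ∀ (n k j : ℕ), 1 ≤ k →
        ∀ (g : ℝ → EuclideanSpace ℝ (Fin n) → ℝ → ℂ) (χ : ℝ → ℝ),
          MemLp (fun p : ℝ × EuclideanSpace ℝ (Fin n) × ℝ => g p.1 p.2.1 p.2.2) 2 volume →
          (∀ ξ₁ ξ' τ, g ξ₁ ξ' τ ≠ 0 →
            ξ₁ ^ 2 + ‖ξ'‖ ^ 2 ∈
                Set.Icc (((2 : ℝ) ^ ((k : ℝ) - 1)) ^ 2) (((2 : ℝ) ^ ((k : ℝ) + 1)) ^ 2) ∧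
              |τ + (ξ₁ ^ 2 + ‖ξ'‖ ^ 2)| ≤ 2 ^ ((j : ℝ) + 1)) →
          (∀ r, χ r ∈ Set.Icc (0 : ℝ) 1) →
          (∀ r, χ r ≠ 0 → 2 ^ (-40 : ℝ) * 2 ^ (k : ℝ) ≤ r) →
          ∀ x₁ : ℝ,
            (∫ p : EuclideanSpace ℝ (Fin n) × ℝ,
                ‖∫ ξ₁ : ℝ, g ξ₁ p.1 p.2 * (χ ξ₁ : ℂ) *
                    Complex.exp (Complex.I * x₁ * ξ₁)‖ ^ 2) ^ (1 / 2 : ℝ) ≤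
              C * 2 ^ (-(k : ℝ) / 2) * 2 ^ ((j : ℝ) / 2) *
                (∫ p : ℝ × EuclideanSpace ℝ (Fin n) × ℝ,
                    ‖g p.1 p.2.1 p.2.2‖ ^ 2) ^ (1 / 2 : ℝ) := by
  refine ⟨2 ^ (21 : ℝ), by positivity, fun n k j _ g χ hg hg_supp hχ hχ_supp x₁ => ?_⟩
  have hg_sq := (memLp_two_iff_integrable_sq_norm hg.1).1 hg
  have hfiber_supp (ξ' : EuclideanSpace ℝ (Fin n)) (τ : ℝ) :
      Function.support (fun ξ => g ξ ξ' τ * (χ ξ : ℂ) * exp (I * x₁ * ξ)) ⊆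
        {ξ | 2 ^ (-40 : ℝ) * 2 ^ (k : ℝ) ≤ ξ ∧ |ξ ^ 2 - -(τ + ‖ξ'‖ ^ 2)| ≤ 2 ^ ((j : ℝ) + 1)} := by
    intro ξ hξ
    have hgχ := left_ne_zero_of_mul hξ
    refine ⟨hχ_supp ξ (ofReal_ne_zero.1 (right_ne_zero_of_mul hgχ)), ?_⟩
    convert (hg_supp ξ ξ' τ (left_ne_zero_of_mul hgχ)).2 using 2
    ring
  calc _ ≤ (2 * 2 ^ ((j : ℝ) + 1) / (2 ^ (-40 : ℝ) * 2 ^ (k : ℝ)) *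
          ∫ q : ℝ × EuclideanSpace ℝ (Fin n) × ℝ, ‖g q.1 q.2.1 q.2.2‖ ^ 2) ^ (1 / 2 : ℝ) := by
        refine Real.rpow_le_rpow (integral_nonneg fun _ => sq_nonneg _)
          (integral_le_mul_integral_prod_of_ae_le (fun _ => sq_nonneg _) hg_sq ?_) (by norm_num)
        filter_upwards [hg_sq.prod_left_ae] with p hp
        exact norm_integral_sq_le_of_support_subset_abs_sq_sub_le (by positivity) (by positivity)
          (hfiber_supp p.1 p.2) (fun ξ => norm_mul_ofReal_mul_exp_le (hχ ξ) x₁ ξ) hp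
    _ = _ := by
        rw [Real.mul_rpow (by positivity) (integral_nonneg fun _ => sq_nonneg _),
          rpow_half_two_mul_two_rpow_div]
end
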